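/- arXiv:1710.04915 — 3 statements merged into one kernel-verified Lean document; each statement's English description precedes it below -/
import Mathlib

section
/- Let k₁ : (0,1)×(-1,0) → [0,∞) and k₂ : (-1,0)×(0,1) → [0,∞) be measurable kernels with ∫_{-1}^0 k₁(v'',v) dv = 1 for a.e. v'' and ∫_0^1 k₂(v,v') dv ≤ 1 for a.e. v'. Then for every s ≠ 0, a > 0 and a.e. (v', v''), we have |∫_{-1}^0 k₁(v'',v) e^{-2isa/|v|} k₂(v,v') dv| < ∫_{-1}^0 k₁(v'',v) k₂(v,v') dv whenever the right-hand side is positive and k₁(v'',·)k₂(·,v') is not concentrated on a null set. -/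
/-!
If `∫ g ≤ ‖∫ g u‖` for a weight `g ≥ 0` and a unimodular phase `u`, write `∫ g u = ‖∫ g u‖ w`
with `|w| = 1`; then `∫ g (1 - Re (w̄ u)) ≤ 0` with a nonnegative integrand, so `u = w` wherever
`g > 0`. The phase `v ↦ exp (-2isa / |v|)` takes each value only on a countable
set of `v`, hence a.e. never equals `w`, which forces `g = 0` a.e.
-/

open MeasureTheory Complex ComplexConjugate

lemma eq_of_norm_eq_one_of_re_conj_mul_eq_one {z w : ℂ} (hz : ‖z‖ = 1) (hw : ‖w‖ = 1)
    (h : (conj w * z).re = 1) : z = w := by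
  have : normSq (z - w) = 0 := by
    rw [normSq_sub, normSq_eq_norm_sq, normSq_eq_norm_sq, hz, hw, mul_comm z]
    linarith
  simpa [sub_eq_zero] using this

lemma ae_eq_zero_or_eq_of_integral_le_norm_integral {α : Type*} [MeasurableSpace α]
    {μ : Measure α} {g : α → ℝ} {u : α → ℂ} (hg0 : ∀ x, 0 ≤ g x) (hg : Integrable g μ)
    (hu : AEStronglyMeasurable u μ) (hu1 : ∀ x, ‖u x‖ = 1)
    (hle : ∫ x, g x ∂μ ≤ ‖∫ x, (g x : ℂ) * u x ∂μ‖) :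
    ∃ w : ℂ, ∀ᵐ x ∂μ, g x = 0 ∨ u x = w := by
  set I := ∫ x, (g x : ℂ) * u x ∂μ
  by_cases hI : I = 0
  · have hg_ae : g =ᵐ[μ] 0 := by
      rw [← integral_eq_zero_iff_of_nonneg hg0 hg]
      exact le_antisymm (by simpa [hI] using hle) (integral_nonneg hg0)
    exact ⟨0, hg_ae.mono fun x hx => Or.inl hx⟩
  set w := I / ‖I‖
  have hw : ‖w‖ = 1 := by simp [w, hI]
  have hconj_w_I : conj w * I = ‖I‖ := by
    rw [map_div₀, conj_ofReal, div_mul_eq_mul_div, conj_mul', div_eq_iff (by simpa using hI)]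
    ring
  have hre_le : ∀ x, (conj w * u x).re ≤ 1 := fun x =>
    (re_le_norm _).trans (by simp [hw, hu1])
  have hgu : Integrable (fun x => (g x : ℂ) * u x) μ :=
    hg.ofReal.mul_bdd hu (Filter.Eventually.of_forall fun x => (hu1 x).le)
  have hrot_eq : (fun x => g x * (conj w * u x).re) =
      fun x => (conj w * ((g x : ℂ) * u x)).re := by
    ext x
    rw [mul_left_comm, re_ofReal_mul]
  have hrot : Integrable (fun x => g x * (conj w * u x).re) μ :=
    hrot_eq ▸ (hgu.const_mul _).re
  have hrot_integral : ∫ x, g x * (conj w * u x).re ∂μ = ‖I‖ := by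
    rw [hrot_eq]
    refine (integral_re (hgu.const_mul (conj w))).trans ?_
    rw [integral_const_mul, hconj_w_I]
    simp
  have hdefect : (fun x => g x * (1 - (conj w * u x).re)) =ᵐ[μ] 0 := by
    have hsplit : (fun x => g x * (1 - (conj w * u x).re)) =
        fun x => g x - g x * (conj w * u x).re := by
      ext x; ring
    rw [← integral_eq_zero_iff_of_nonneg
      (fun x => mul_nonneg (hg0 x) (sub_nonneg.2 (hre_le x))) (hsplit ▸ hg.sub hrot),
      hsplit, integral_sub hg hrot, hrot_integral]
    exact le_antisymm (sub_nonpos.2 hle) (sub_nonneg.2 (hrot_integral ▸ integral_mono hrot hg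
      fun x => mul_le_of_le_one_right (hg0 x) (hre_le x)))
  exact ⟨w, hdefect.mono fun x hx => (mul_eq_zero.1 hx).imp_right fun h =>
    eq_of_norm_eq_one_of_re_conj_mul_eq_one (hu1 x) hw (by linarith)⟩

lemma norm_integral_ofReal_mul_lt_integral {α : Type*} [MeasurableSpace α]
    {μ : Measure α} {g : α → ℝ} {u : α → ℂ} (hg0 : ∀ x, 0 ≤ g x) (hg : Integrable g μ)
    (hu : AEStronglyMeasurable u μ) (hu1 : ∀ x, ‖u x‖ = 1) (hu_ne : ∀ c, ∀ᵐ x ∂μ, u x ≠ c)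
    (hg_ne : ¬ g =ᵐ[μ] 0) :
    ‖∫ x, (g x : ℂ) * u x ∂μ‖ < ∫ x, g x ∂μ := by
  by_contra! hle
  obtain ⟨w, hw⟩ := ae_eq_zero_or_eq_of_integral_le_norm_integral hg0 hg hu hu1 hle
  exact hg_ne (by filter_upwards [hw, hu_ne w] with x hx hxw using hx.resolve_right hxw)

lemma countable_setOf_cexp_div_abs_eq {b : ℂ} (hb : b ≠ 0) (c : ℂ) :
    {v : ℝ | cexp (b / (|v| : ℝ)) = c}.Countable := by
  have hinj : Function.Injective fun r : ℝ => b / (r : ℂ) := by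
    intro r r' h
    simp only [div_eq_mul_inv] at h
    exact_mod_cast inv_injective (mul_left_cancel₀ hb h)
  have hT := (countable_preimage_exp.2 (Set.countable_singleton c)).preimage hinj
  refine (hT.union (hT.preimage neg_injective)).mono fun v hv => ?_
  rcases abs_choice v with h | h
  · exact Or.inl (by simpa [h] using hv)
  · exact Or.inr (by simpa [h] using hv)

lemma ae_cexp_div_abs_ne {b : ℂ} (hb : b ≠ 0) (c : ℂ) :
    ∀ᵐ v : ℝ, cexp (b / (|v| : ℝ)) ≠ c :=
  measure_eq_zero_iff_ae_notMem.1 ((countable_setOf_cexp_div_abs_eq hb c).measure_zero _)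

lemma norm_cexp_neg_mul_I_div_ofReal (t r : ℝ) : ‖cexp (-(t * I) / (r : ℂ))‖ = 1 := by
  rw [show -(t * I) / (r : ℂ) = ((-t / r : ℝ) : ℂ) * I by push_cast; ring,
    norm_exp_ofReal_mul_I]

theorem stmt2_general (k₁ k₂ : ℝ → ℝ → ℝ) (a s : ℝ) (ha : 0 < a) (hs : s ≠ 0)
    (hk₁ : ∀ v'' v, 0 ≤ k₁ v'' v) (hk₂ : ∀ v v', 0 ≤ k₂ v v') :
    ∀ v' v'' : ℝ,
      IntegrableOn (fun v => k₁ v'' v * k₂ v v') (Set.Ioo (-1:ℝ) 0) →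
      (0 < ∫ v in Set.Ioo (-1:ℝ) 0, k₁ v'' v * k₂ v v') →
      ¬ ((fun v => k₁ v'' v * k₂ v v') =ᵐ[volume.restrict (Set.Ioo (-1:ℝ) 0)] 0) →
      ‖∫ v in Set.Ioo (-1:ℝ) 0,
          (k₁ v'' v : ℂ) * Complex.exp (-(2 * s * a * Complex.I) / ((|v| : ℝ) : ℂ)) * (k₂ v v' : ℂ)‖
        < ∫ v in Set.Ioo (-1:ℝ) 0, k₁ v'' v * k₂ v v' := by
  intro v' v'' hint _ hne
  have hb : -(2 * s * a * I) ≠ 0 := by simp [hs, ha.ne']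
  have hu : Measurable fun v : ℝ => cexp (-(2 * s * a * I) / ((|v| : ℝ) : ℂ)) := by fun_prop
  have hregroup : (fun v : ℝ => (k₁ v'' v : ℂ) * cexp (-(2 * s * a * I) / ((|v| : ℝ) : ℂ)) *
      (k₂ v v' : ℂ)) = fun v => ((k₁ v'' v * k₂ v v' : ℝ) : ℂ) *
      cexp (-(2 * s * a * I) / ((|v| : ℝ) : ℂ)) := by
    ext v
    push_cast
    ring
  rw [hregroup]
  exact norm_integral_ofReal_mul_lt_integral
    (fun v => mul_nonneg (hk₁ v'' v) (hk₂ v v')) hint hu.aestronglyMeasurable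
    (fun v => by exact_mod_cast norm_cexp_neg_mul_I_div_ofReal (2 * s * a) |v|)
    (fun c => ae_restrict_of_ae (ae_cexp_div_abs_ne hb c)) hne

/-- Strict triangle inequality for the oscillatory kernel integral: for `s ≠ 0`, `a > 0`,
the modulus of `∫ k₁(v'',v) e^{-2isa/|v|} k₂(v,v') dv` is strictly less than
`∫ k₁(v'',v) k₂(v,v') dv` whenever the latter is positive (equivalently, the product
kernel is not concentrated on a null set). -/
theorem stmt2 (k₁ k₂ : ℝ → ℝ → ℝ) (a s : ℝ) (ha : 0 < a) (hs : s ≠ 0)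
    (hk₁ : ∀ v'' v, 0 ≤ k₁ v'' v) (hk₂ : ∀ v v', 0 ≤ k₂ v v')
    (hmeas₁ : ∀ v'', Measurable (k₁ v'')) (hmeas₂ : ∀ v', Measurable fun v => k₂ v v')
    (hnorm₁ : ∀ᵐ v'' ∂(volume.restrict (Set.Ioo (0:ℝ) 1)),
      ∫ v in Set.Ioo (-1:ℝ) 0, k₁ v'' v = 1)
    (hnorm₂ : ∀ᵐ v' ∂(volume.restrict (Set.Ioo (0:ℝ) 1)),
      ∫ v in Set.Ioo (-1:ℝ) 0, k₂ v v' ≤ 1) :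
    ∀ v' v'' : ℝ,
      IntegrableOn (fun v => k₁ v'' v * k₂ v v') (Set.Ioo (-1:ℝ) 0) →
      (0 < ∫ v in Set.Ioo (-1:ℝ) 0, k₁ v'' v * k₂ v v') →
      ¬ ((fun v => k₁ v'' v * k₂ v v') =ᵐ[volume.restrict (Set.Ioo (-1:ℝ) 0)] 0) →
      ‖∫ v in Set.Ioo (-1:ℝ) 0,
          (k₁ v'' v : ℂ) * Complex.exp (-(2 * s * a * Complex.I) / ((|v| : ℝ) : ℂ)) * (k₂ v v' : ℂ)‖
        < ∫ v in Set.Ioo (-1:ℝ) 0, k₁ v'' v * k₂ v v' :=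
  stmt2_general k₁ k₂ a s ha hs hk₁ hk₂
end

section
/- Let X be a Banach space, (G_n) a sequence of bounded operators on X and G a bounded operator, with sup_n ‖G_n²‖ ≤ c < 1, sup_n ‖G_n‖ ≤ M, and G_n → G strongly (i.e. G_n x → G x for all x). Assume additionally that G_n² → G² strongly. Then 1 - G_n and 1 - G are invertible and (1-G_n)^{-1} x → (1-G)^{-1} x for every x ∈ X. -/
/-!
Since `1 - g² = (1 - g)(1 + g)` with commuting factors, `‖g²‖ < 1` makes `1 - g` invertible with
`(1 - g)⁻¹ = (1 + g) ∑ⱼ (g²)ʲ`. Under a uniform operator bound, strong convergence passes to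
products and powers, and the Neumann series `∑ⱼ (G_n²)ʲ x` converges to `∑ⱼ (G²)ʲ x` by
dominated convergence for series (Tannery's theorem), with dominating series `∑ⱼ cʲ ‖x‖`.
-/

open Filter Topology

theorem isUnit_one_sub_of_isUnit_one_sub_mul_self {R : Type*} [Ring R] {g : R}
    (h : IsUnit (1 - g * g)) : IsUnit (1 - g) := by
  have hcomm : Commute (1 - g) (1 + g) := by
    unfold Commute SemiconjBy
    noncomm_ring
  have hfac : 1 - g * g = (1 - g) * (1 + g) := by noncomm_ring
  exact (hcomm.isUnit_mul_iff.1 (hfac ▸ h)).1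

theorem Ring.inverse_one_sub_eq_mul_inverse_one_sub_mul_self {R : Type*} [Ring R] {g : R}
    (h : IsUnit (1 - g * g)) : Ring.inverse (1 - g) = (1 + g) * Ring.inverse (1 - g * g) := by
  have hfac : (1 - g) * (1 + g) = 1 - g * g := by noncomm_ring
  simpa using (Ring.inverse_mul_eq_iff_eq_mul (1 - g) 1 _
    (isUnit_one_sub_of_isUnit_one_sub_mul_self h)).2
    (by rw [← mul_assoc, hfac, Ring.mul_inverse_cancel _ h])

namespace ContinuousLinearMap

variable {𝕜 E F ι : Type*} [NontriviallyNormedField 𝕜] [NormedAddCommGroup E] [NormedSpace 𝕜 E]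
  [NormedAddCommGroup F] [NormedSpace 𝕜 F] {l : Filter ι}

theorem tendsto_apply_of_norm_le {A : ι → E →L[𝕜] F} {A₀ : E →L[𝕜] F} {C : ℝ}
    (hA : ∀ i, ‖A i‖ ≤ C) (hlim : ∀ x, Tendsto (fun i => A i x) l (𝓝 (A₀ x)))
    {y : ι → E} {y₀ : E} (hy : Tendsto y l (𝓝 y₀)) :
    Tendsto (fun i => A i (y i)) l (𝓝 (A₀ y₀)) := by
  have hsmall : Tendsto (fun i => A i (y i - y₀)) l (𝓝 0) := by
    refine squeeze_zero_norm (fun i => (A i).le_of_opNorm_le (hA i) _) ?_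
    simpa using (tendsto_iff_norm_sub_tendsto_zero.1 hy).const_mul C
  simpa using hsmall.add (hlim y₀)

theorem opNorm_le_of_tendsto_apply [l.NeBot] {A : ι → E →L[𝕜] F} {A₀ : E →L[𝕜] F} {C : ℝ}
    (hA : ∀ i, ‖A i‖ ≤ C) (hlim : ∀ x, Tendsto (fun i => A i x) l (𝓝 (A₀ x))) : ‖A₀‖ ≤ C := by
  have hC : 0 ≤ C := (norm_nonneg _).trans (hA (l.nonempty_of_neBot.some))
  refine A₀.opNorm_le_bound hC fun x => le_of_tendsto (hlim x).norm ?_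
  exact Eventually.of_forall fun i => (A i).le_of_opNorm_le (hA i) x

theorem tendsto_pow_apply {A : ι → E →L[𝕜] E} {A₀ : E →L[𝕜] E} {C : ℝ}
    (hA : ∀ i, ‖A i‖ ≤ C) (hlim : ∀ x, Tendsto (fun i => A i x) l (𝓝 (A₀ x))) (j : ℕ) (x : E) :
    Tendsto (fun i => (A i ^ j) x) l (𝓝 ((A₀ ^ j) x)) := by
  induction j generalizing x with
  | zero => simpa using tendsto_const_nhds
  | succ j ih =>
    simpa only [pow_succ', mul_apply_eq_comp] using tendsto_apply_of_norm_le hA hlim (ih x)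

theorem norm_pow_apply_le {T : E →L[𝕜] E} {c : ℝ} (hT : ‖T‖ ≤ c) (j : ℕ) (x : E) :
    ‖(T ^ j) x‖ ≤ c ^ j * ‖x‖ := by
  induction j with
  | zero => simp
  | succ j ih =>
    calc ‖(T ^ (j + 1)) x‖ = ‖T ((T ^ j) x)‖ := by rw [pow_succ', mul_apply_eq_comp]
      _ ≤ c * ‖(T ^ j) x‖ := T.le_of_opNorm_le hT _
      _ ≤ c * (c ^ j * ‖x‖) := mul_le_mul_of_nonneg_left ih ((norm_nonneg T).trans hT)
      _ = c ^ (j + 1) * ‖x‖ := by ring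

variable [CompleteSpace E]

theorem inverse_one_sub_apply {T : E →L[𝕜] E} (hT : ‖T‖ < 1) (x : E) :
    Ring.inverse (1 - T) x = ∑' j, (T ^ j) x := by
  rw [NormedRing.inverse_one_sub T hT]
  exact (apply 𝕜 E x).map_tsum (summable_geometric_of_norm_lt_one hT)

theorem tendsto_inverse_one_sub_apply [l.NeBot] {T : ι → E →L[𝕜] E} {T₀ : E →L[𝕜] E} {c : ℝ}
    (hc : c < 1) (hT : ∀ i, ‖T i‖ ≤ c) (hlim : ∀ x, Tendsto (fun i => T i x) l (𝓝 (T₀ x)))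
    (x : E) : Tendsto (fun i => Ring.inverse (1 - T i) x) l (𝓝 (Ring.inverse (1 - T₀) x)) := by
  have hT₀ : ‖T₀‖ ≤ c := opNorm_le_of_tendsto_apply hT hlim
  have hc₀ : 0 ≤ c := (norm_nonneg _).trans hT₀
  simp only [inverse_one_sub_apply ((hT _).trans_lt hc), inverse_one_sub_apply (hT₀.trans_lt hc)]
  exact tendsto_tsum_of_dominated_convergence
    ((summable_geometric_of_lt_one hc₀ hc).mul_right ‖x‖) (tendsto_pow_apply hT hlim · x)
    (Eventually.of_forall fun i j => norm_pow_apply_le (hT i) j x)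

end ContinuousLinearMap

/-- If `sup_n ‖G_n²‖ ≤ c < 1`, `sup_n ‖G_n‖ ≤ M`, `G_n → G` strongly and `G_n² → G²`
strongly, then `1 - G_n` and `1 - G` are invertible and `(1-G_n)⁻¹ → (1-G)⁻¹` strongly. -/
theorem stmt10 {X : Type*} [NormedAddCommGroup X] [NormedSpace ℂ X] [CompleteSpace X]
    (G : ℕ → X →L[ℂ] X) (Glim : X →L[ℂ] X) (c M : ℝ) (hc : c < 1)
    (hGsq : ∀ n, ‖G n * G n‖ ≤ c) (hGb : ∀ n, ‖G n‖ ≤ M)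
    (hstrong : ∀ x, Tendsto (fun n => G n x) atTop (nhds (Glim x)))
    (hstrong2 : ∀ x, Tendsto (fun n => (G n * G n) x) atTop (nhds ((Glim * Glim) x))) :
    (∀ n, IsUnit (1 - G n)) ∧ IsUnit (1 - Glim) ∧
      ∀ x, Tendsto (fun n => Ring.inverse (1 - G n) x) atTop
        (nhds (Ring.inverse (1 - Glim) x)) := by
  have hunit : ∀ g : X →L[ℂ] X, ‖g * g‖ ≤ c → IsUnit (1 - g * g) :=
    fun g hg => (Units.oneSub _ (hg.trans_lt hc)).isUnit
  have hGlim : ‖Glim * Glim‖ ≤ c := ContinuousLinearMap.opNorm_le_of_tendsto_apply hGsq hstrong2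
  have hformula : ∀ g : X →L[ℂ] X, ‖g * g‖ ≤ c → ∀ x, Ring.inverse (1 - g) x =
      Ring.inverse (1 - g * g) x + g (Ring.inverse (1 - g * g) x) := fun g hg x => by
    rw [Ring.inverse_one_sub_eq_mul_inverse_one_sub_mul_self (hunit g hg)]
    rfl
  refine ⟨fun n => isUnit_one_sub_of_isUnit_one_sub_mul_self (hunit _ (hGsq n)),
    isUnit_one_sub_of_isUnit_one_sub_mul_self (hunit _ hGlim), fun x => ?_⟩
  have hsq := ContinuousLinearMap.tendsto_inverse_one_sub_apply hc hGsq hstrong2 x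
  rw [hformula Glim hGlim]
  exact (hsq.add (ContinuousLinearMap.tendsto_apply_of_norm_le hGb hstrong hsq)).congr
    fun n => (hformula _ (hGsq n) x).symm
end

section
/- Consequently (with u as above), there exist δ > 0 and ĉ > 0 such that |∫_{-1}^0 φ(v) e^{-2isa/|v|} ψ(v) dv| ≤ ∫_{-1}^0 φ(v)ψ(v) dv − ĉ s² for all |s| ≤ δ. -/
/-!
Write `F = φψ` and `ω v = -2a/|v|`. Multiplying the integral by the unimodular factor `e^{isc₀}`,
where `c₀` is the `F`-weighted mean of `ω`, replaces `ω` by `θ = ω - c₀`, whose `F`-weighted mean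
vanishes. Then `z(s) = ∫ F e^{isθ}` satisfies `‖z(s) - ∫ F‖ ≤ 2 s² ∫ F θ²` (second-order Taylor
bound, the first-order term integrating to zero), and `Re z(s) ≤ ∫ F - c s²` by the bound
`1 - cos x ≥ 2x²/π²` on a set where `θ` is bounded and which still carries positive `F θ²`-mass;
this mass is positive because `ω` takes each value at most twice, so `F` is not concentrated on a
level set of `ω`. A point within `O(s²)` of `∫ F` whose real part is at most `∫ F - c s²` has
norm at most `∫ F - c s² / 2` once `s` is small.
-/

open MeasureTheory

namespace Complex

theorem norm_exp_ofReal_mul_I_sub_one_sub_le (x : ℝ) :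
    ‖exp (x * I) - 1 - x * I‖ ≤ 2 * x ^ 2 := by
  have hxI : ‖(x : ℂ) * I‖ = |x| := by simp
  rcases le_total |x| 1 with hx | hx
  · calc ‖exp (x * I) - 1 - x * I‖ ≤ ‖(x : ℂ) * I‖ ^ 2 :=
          norm_exp_sub_one_sub_id_le (hxI.trans_le hx)
      _ ≤ 2 * x ^ 2 := by rw [hxI, sq_abs]; nlinarith [sq_nonneg x]
  · calc ‖exp (x * I) - 1 - x * I‖ ≤ ‖exp (x * I) - 1‖ + ‖(x : ℂ) * I‖ := norm_sub_le _ _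
      _ ≤ |x| + |x| := by
          rw [hxI, mul_comm]
          gcongr
          simpa using Real.norm_exp_I_mul_ofReal_sub_one_le (x := x)
      _ ≤ 2 * x ^ 2 := by nlinarith [sq_abs x]

theorem norm_le_of_re_le_of_norm_sub_ofReal_le {w : ℂ} {M K c t : ℝ} (hc : 0 < c) (ht : 0 ≤ t)
    (hsmall : t * (K ^ 2 + c ^ 2) ≤ M * c) (hre : w.re ≤ M - c * t) (hnorm : ‖w - M‖ ≤ K * t) :
    ‖w‖ ≤ M - c / 2 * t := by
  have him : |w.im| ≤ K * t := by
    simpa using (abs_im_le_norm (w - M)).trans hnorm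
  have hre_lo : M - K * t ≤ w.re := by
    have := (abs_re_le_norm (w - M)).trans hnorm
    simp only [sub_re, ofReal_re] at this
    linarith [neg_abs_le (w.re - M)]
  have hK : 0 ≤ K * t := (abs_nonneg _).trans him
  have hM : c * t ≤ M := by nlinarith
  have hM0 : 0 ≤ M := (mul_nonneg hc.le ht).trans hM
  have hKt : K * t ≤ M := by
    refine (pow_le_pow_iff_left₀ hK (by linarith) two_ne_zero).mp ?_
    nlinarith [mul_le_mul_of_nonneg_left hsmall ht, mul_le_mul_of_nonneg_left hM hM0,
      sq_nonneg (c * t)]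
  have hre2 : w.re ^ 2 ≤ (M - c * t) ^ 2 := pow_le_pow_left₀ (by linarith) hre 2
  have him2 : w.im ^ 2 ≤ (K * t) ^ 2 := by
    simpa only [sq_abs] using pow_le_pow_left₀ (abs_nonneg _) him 2
  rw [norm_def, normSq_apply, ← sq, ← sq, Real.sqrt_le_left (by linarith)]
  nlinarith [mul_le_mul_of_nonneg_left hsmall ht, sq_nonneg (c * t)]

end Complex

section

open Complex

variable {α : Type*} [MeasurableSpace α] {μ : Measure α} {F θ : α → ℝ}

theorem MeasureTheory.Integrable.mul_of_abs_le_const_mul {f g w : α → ℝ}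
    (hfw : Integrable (fun x => f x * w x) μ) (hf0 : 0 ≤ᵐ[μ] f) (hf : AEStronglyMeasurable f μ)
    (hg : AEStronglyMeasurable g μ) (C : ℝ)
    (hgw : ∀ x, |g x| ≤ C * w x) : Integrable (fun x => f x * g x) μ := by
  refine (hfw.const_mul C).mono' (hf.mul hg) ?_
  filter_upwards [hf0] with x hx
  rw [norm_mul, Real.norm_of_nonneg hx, Real.norm_eq_abs, mul_left_comm]
  exact mul_le_mul_of_nonneg_left (hgw x) hx

theorem integrable_ofReal_mul_exp_ofReal_mul_I (hF : Integrable F μ)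
    (hθ : AEStronglyMeasurable θ μ) :
    Integrable (fun x => (F x : ℂ) * exp (θ x * I)) μ := by
  refine (hF.ofReal (𝕜 := ℂ)).mono (by fun_prop) (ae_of_all _ fun x => ?_)
  simp [norm_exp_ofReal_mul_I]

theorem integrable_mul_of_integrable_mul_sq (hF0 : 0 ≤ᵐ[μ] F) (hF : Integrable F μ)
    (hθ : AEStronglyMeasurable θ μ) (hFθ2 : Integrable (fun x => F x * θ x ^ 2) μ) :
    Integrable (fun x => F x * θ x) μ := by
  refine (hF.add hFθ2).mono' (hF.aestronglyMeasurable.mul hθ) ?_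
  filter_upwards [hF0] with x hx
  rw [norm_mul, Real.norm_of_nonneg hx, Real.norm_eq_abs, Pi.add_apply]
  have hθ_le : |θ x| ≤ 1 + θ x ^ 2 := by nlinarith [sq_abs (θ x), sq_nonneg (|θ x| - 1)]
  nlinarith [mul_le_mul_of_nonneg_left hθ_le hx]

theorem re_integral_ofReal_mul_exp_ofReal_mul_I (hF : Integrable F μ)
    (hθ : AEStronglyMeasurable θ μ) :
    (∫ x, (F x : ℂ) * exp (θ x * I) ∂μ).re = ∫ x, F x * Real.cos (θ x) ∂μ := by
  rw [← RCLike.re_to_complex, ← integral_re (integrable_ofReal_mul_exp_ofReal_mul_I hF hθ)]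
  simp only [RCLike.re_to_complex, re_ofReal_mul, exp_ofReal_mul_I_re]

theorem norm_integral_ofReal_mul_exp_sub_integral_le (hF0 : 0 ≤ᵐ[μ] F) (hF : Integrable F μ)
    (hθ : AEStronglyMeasurable θ μ) (hFθ : Integrable (fun x => F x * θ x) μ)
    (hFθ2 : Integrable (fun x => F x * θ x ^ 2) μ) (hmean : ∫ x, F x * θ x ∂μ = 0) (s : ℝ) :
    ‖(∫ x, (F x : ℂ) * exp ((s * θ x : ℝ) * I) ∂μ) - ∫ x, F x ∂μ‖
      ≤ 2 * (∫ x, F x * θ x ^ 2 ∂μ) * s ^ 2 := by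
  have hexp := integrable_ofReal_mul_exp_ofReal_mul_I hF (hθ.const_mul s)
  have hremainder : (∫ x, (F x : ℂ) * exp ((s * θ x : ℝ) * I) ∂μ) - ∫ x, F x ∂μ
      = ∫ x, (F x : ℂ) * (exp ((s * θ x : ℝ) * I) - 1 - (s * θ x : ℝ) * I) ∂μ := by
    have hsplit : ∀ x, (F x : ℂ) * (exp ((s * θ x : ℝ) * I) - 1 - (s * θ x : ℝ) * I)
        = (F x : ℂ) * exp ((s * θ x : ℝ) * I) - F x - (s * I) * ((F x * θ x : ℝ) : ℂ) := by
      intro x; push_cast; ring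
    simp_rw [hsplit]
    rw [integral_sub, integral_sub, integral_const_mul, integral_complex_ofReal,
      integral_complex_ofReal, hmean, ofReal_zero, mul_zero, sub_zero]
    · exact hexp
    · exact hF.ofReal
    · exact hexp.sub hF.ofReal
    · exact hFθ.ofReal.const_mul _
  rw [hremainder]
  calc _ ≤ ∫ x, 2 * s ^ 2 * (F x * θ x ^ 2) ∂μ := by
        refine norm_integral_le_of_norm_le (hFθ2.const_mul _) ?_
        filter_upwards [hF0] with x hx
        rw [norm_mul, norm_real, Real.norm_of_nonneg hx]
        calc F x * ‖exp ((s * θ x : ℝ) * I) - 1 - (s * θ x : ℝ) * I‖ ≤ F x * (2 * (s * θ x) ^ 2) :=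
              mul_le_mul_of_nonneg_left (norm_exp_ofReal_mul_I_sub_one_sub_le _) hx
          _ = 2 * s ^ 2 * (F x * θ x ^ 2) := by ring
    _ = 2 * (∫ x, F x * θ x ^ 2 ∂μ) * s ^ 2 := by rw [integral_const_mul]; ring

theorem exists_pos_setIntegral_abs_le {f : α → ℝ} (hf : Integrable f μ) (hθ : Measurable θ)
    (hpos : 0 < ∫ x, f x ∂μ) : ∃ b > 0, 0 < ∫ x in {x | |θ x| ≤ b}, f x ∂μ := by
  let S : ℕ → Set α := fun n => {x | |θ x| ≤ n + 1}
  have hS : Monotone S := fun m n hmn x (hx : |θ x| ≤ m + 1) =>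
    show |θ x| ≤ n + 1 from hx.trans (by gcongr)
  have hunion : (⋃ n, S n) = Set.univ := by
    refine Set.eq_univ_of_forall fun x => Set.mem_iUnion.mpr ?_
    obtain ⟨n, hn⟩ := exists_nat_ge |θ x|
    exact ⟨n, show |θ x| ≤ n + 1 by linarith⟩
  have hlim := tendsto_setIntegral_of_monotone (fun n => measurableSet_le hθ.abs measurable_const)
    hS hf.integrableOn
  rw [hunion, Measure.restrict_univ] at hlim
  obtain ⟨n, hn⟩ := (hlim.eventually_const_lt hpos).exists
  exact ⟨n + 1, by positivity, hn⟩

theorem exists_re_integral_ofReal_mul_exp_le (hF0 : 0 ≤ᵐ[μ] F) (hF : Integrable F μ)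
    (hθ : Measurable θ) (hFθ2 : Integrable (fun x => F x * θ x ^ 2) μ)
    (hpos : 0 < ∫ x, F x * θ x ^ 2 ∂μ) :
    ∃ δ > 0, ∃ c > 0, ∀ s : ℝ, |s| ≤ δ →
      (∫ x, (F x : ℂ) * exp ((s * θ x : ℝ) * I) ∂μ).re ≤ (∫ x, F x ∂μ) - c * s ^ 2 := by
  obtain ⟨b, hb, hSpos⟩ := exists_pos_setIntegral_abs_le hFθ2 hθ hpos
  refine ⟨Real.pi / b, by positivity, 2 / Real.pi ^ 2 * ∫ x in {x | |θ x| ≤ b}, F x * θ x ^ 2 ∂μ,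
    by positivity, fun s hs => ?_⟩
  have hcos : Integrable (fun x => F x * Real.cos (s * θ x)) μ := by
    refine hF.mono (by fun_prop) (ae_of_all _ fun x => ?_)
    rw [norm_mul]
    exact mul_le_of_le_one_right (norm_nonneg _) (Real.abs_cos_le_one _)
  have hone : Integrable (fun x => F x * (1 - Real.cos (s * θ x))) μ :=
    (hF.sub hcos).congr (ae_of_all _ fun x => by simp only [Pi.sub_apply]; ring)
  have hgap : 2 / Real.pi ^ 2 * (∫ x in {x | |θ x| ≤ b}, F x * θ x ^ 2 ∂μ) * s ^ 2
      ≤ ∫ x, F x * (1 - Real.cos (s * θ x)) ∂μ := calc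
    _ = ∫ x in {x | |θ x| ≤ b}, 2 / Real.pi ^ 2 * s ^ 2 * (F x * θ x ^ 2) ∂μ := by
        rw [integral_const_mul]; ring
    _ ≤ ∫ x in {x | |θ x| ≤ b}, F x * (1 - Real.cos (s * θ x)) ∂μ := by
        refine setIntegral_mono_on_ae (hFθ2.const_mul _).integrableOn hone.integrableOn
          (measurableSet_le hθ.abs measurable_const) ?_
        filter_upwards [hF0] with x hx (hxb : |θ x| ≤ b)
        have hsθ : |s * θ x| ≤ Real.pi := by
          rw [abs_mul]
          calc |s| * |θ x| ≤ Real.pi / b * b := mul_le_mul hs hxb (abs_nonneg _) (by positivity)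
            _ = Real.pi := div_mul_cancel₀ _ hb.ne'
        nlinarith [mul_le_mul_of_nonneg_left (Real.cos_le_one_sub_mul_cos_sq hsθ) hx]
    _ ≤ ∫ x, F x * (1 - Real.cos (s * θ x)) ∂μ := by
        refine setIntegral_le_integral hone ?_
        filter_upwards [hF0] with x hx
        exact mul_nonneg hx (sub_nonneg.mpr (Real.cos_le_one _))
  have hsplit : ∫ x, F x * (1 - Real.cos (s * θ x)) ∂μ
      = (∫ x, F x ∂μ) - ∫ x, F x * Real.cos (s * θ x) ∂μ := by
    rw [← integral_sub hF hcos]; simp only [mul_sub, mul_one]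
  rw [re_integral_ofReal_mul_exp_ofReal_mul_I hF (by fun_prop)]
  linarith

theorem exists_norm_integral_ofReal_mul_exp_le_of_integral_mul_eq_zero (hF0 : 0 ≤ᵐ[μ] F)
    (hF : Integrable F μ) (hθ : Measurable θ) (hFθ2 : Integrable (fun x => F x * θ x ^ 2) μ)
    (hmean : ∫ x, F x * θ x ∂μ = 0) (hpos : 0 < ∫ x, F x * θ x ^ 2 ∂μ) :
    ∃ δ > 0, ∃ c > 0, ∀ s : ℝ, |s| ≤ δ →
      ‖∫ x, (F x : ℂ) * exp ((s * θ x : ℝ) * I) ∂μ‖ ≤ (∫ x, F x ∂μ) - c * s ^ 2 := by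
  obtain ⟨δ, hδ, c, hc, hre⟩ := exists_re_integral_ofReal_mul_exp_le hF0 hF hθ hFθ2 hpos
  set M := ∫ x, F x ∂μ
  set K := 2 * ∫ x, F x * θ x ^ 2 ∂μ
  have hM : 0 < M := by
    refine (integral_nonneg_of_ae hF0).lt_of_ne fun hM => hpos.ne' ?_
    refine integral_eq_zero_of_ae ?_
    filter_upwards [(integral_eq_zero_iff_of_nonneg_ae hF0 hF).mp hM.symm] with x hx
    simp [hx]
  have hsmall : 0 < M * c / (K ^ 2 + c ^ 2) := by positivity
  refine ⟨min δ √(M * c / (K ^ 2 + c ^ 2)), lt_min hδ (Real.sqrt_pos.mpr hsmall), c / 2,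
    half_pos hc, fun s hs => ?_⟩
  have hs2 : s ^ 2 * (K ^ 2 + c ^ 2) ≤ M * c := by
    rw [← le_div_iff₀ (by positivity), Real.sq_le hsmall.le, ← abs_le]
    exact hs.trans (min_le_right _ _)
  exact Complex.norm_le_of_re_le_of_norm_sub_ofReal_le hc (sq_nonneg s) hs2
    (hre s (hs.trans (min_le_left _ _)))
    (norm_integral_ofReal_mul_exp_sub_integral_le hF0 hF hθ.aestronglyMeasurable
      (integrable_mul_of_integrable_mul_sq hF0 hF hθ.aestronglyMeasurable hFθ2) hFθ2 hmean s)

theorem exists_norm_integral_ofReal_mul_exp_le (hF0 : 0 ≤ᵐ[μ] F) (hF : Integrable F μ)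
    (hθ : Measurable θ) (hFθ2 : Integrable (fun x => F x * θ x ^ 2) μ)
    (hnonconst : ∀ c, ¬ ∀ᵐ x ∂μ, F x = 0 ∨ θ x = c) :
    ∃ δ > 0, ∃ c > 0, ∀ s : ℝ, |s| ≤ δ →
      ‖∫ x, (F x : ℂ) * exp ((s * θ x : ℝ) * I) ∂μ‖ ≤ (∫ x, F x ∂μ) - c * s ^ 2 := by
  have hFθ := integrable_mul_of_integrable_mul_sq hF0 hF hθ.aestronglyMeasurable hFθ2
  set M := ∫ x, F x ∂μ
  have hM : 0 < M := by
    refine (integral_nonneg_of_ae hF0).lt_of_ne fun hM => hnonconst 0 ?_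
    filter_upwards [(integral_eq_zero_iff_of_nonneg_ae hF0 hF).mp hM.symm] with x hx
    exact Or.inl hx
  set m := (∫ x, F x * θ x ∂μ) / M
  have hFθm2 : Integrable (fun x => F x * (θ x - m) ^ 2) μ :=
    ((hFθ2.sub (hFθ.const_mul (2 * m))).add (hF.const_mul (m ^ 2))).congr
      (ae_of_all _ fun x => by simp only [Pi.add_apply, Pi.sub_apply]; ring)
  have hmean : ∫ x, F x * (θ x - m) ∂μ = 0 := by
    simp only [mul_sub]
    rw [integral_sub hFθ (hF.mul_const m), integral_mul_const, mul_div_cancel₀ _ hM.ne', sub_self]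
  have hpos : 0 < ∫ x, F x * (θ x - m) ^ 2 ∂μ := by
    have hnonneg : 0 ≤ᵐ[μ] fun x => F x * (θ x - m) ^ 2 := by
      filter_upwards [hF0] with x hx using mul_nonneg hx (sq_nonneg _)
    refine (integral_nonneg_of_ae hnonneg).lt_of_ne fun h => hnonconst m ?_
    filter_upwards [(integral_eq_zero_iff_of_nonneg_ae hnonneg hFθm2).mp h.symm] with x hx
    simpa [sub_eq_zero] using hx
  obtain ⟨δ, hδ, c, hc, h⟩ := exists_norm_integral_ofReal_mul_exp_le_of_integral_mul_eq_zero hF0 hF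
    (hθ.sub_const m) hFθm2 hmean hpos
  refine ⟨δ, hδ, c, hc, fun s hs => ?_⟩
  have hrotate : ∫ x, (F x : ℂ) * exp ((s * θ x : ℝ) * I) ∂μ
      = exp ((s * m : ℝ) * I) * ∫ x, (F x : ℂ) * exp ((s * (θ x - m) : ℝ) * I) ∂μ := by
    rw [← integral_const_mul]
    congr 1 with x
    rw [mul_left_comm, ← exp_add]
    push_cast
    ring_nf
  rw [hrotate, norm_mul, norm_exp_ofReal_mul_I, one_mul]
  exact h s hs

end

theorem volume_setOf_mul_inv_abs_eq {k : ℝ} (hk : k ≠ 0) (c : ℝ) :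
    volume {v : ℝ | k * |v|⁻¹ = c} = 0 := by
  refine measure_mono_null (fun v (hv : k * |v|⁻¹ = c) => ?_)
    ((Set.toFinite {k / c, -(k / c)}).measure_zero volume)
  have hinv : |v|⁻¹ = c / k := (eq_div_iff hk).mpr (by rw [mul_comm, hv])
  have habs : |v| = k / c := by rw [← inv_inv |v|, hinv, inv_div]
  exact eq_or_eq_neg_of_abs_eq habs

/-- There exist `δ > 0` and `ĉ > 0` such that
`|∫ φ e^{-2isa/|v|} ψ dv| ≤ ∫ φψ dv - ĉ s²` for all `|s| ≤ δ`. -/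
theorem stmt13 (φ ψ : ℝ → ℝ) (a : ℝ) (ha : 0 < a)
    (hφ : Measurable φ) (hψ : Measurable ψ)
    (hφ0 : ∀ v ∈ Set.Ioo (-1:ℝ) 0, 0 ≤ φ v) (hψ0 : ∀ v ∈ Set.Ioo (-1:ℝ) 0, 0 ≤ ψ v)
    (hint : IntegrableOn (fun v => φ v * ψ v * (1 + |v|⁻¹ + (|v| ^ 2)⁻¹))
      (Set.Ioo (-1:ℝ) 0))
    (hne : ¬ ((fun v => φ v * ψ v) =ᵐ[volume.restrict (Set.Ioo (-1:ℝ) 0)] 0)) :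
    ∃ δ > (0:ℝ), ∃ c > (0:ℝ), ∀ s : ℝ, |s| ≤ δ →
      ‖∫ v in Set.Ioo (-1:ℝ) 0,
          (φ v : ℂ) * Complex.exp (-(2 * s * a * Complex.I) / ((|v| : ℝ) : ℂ)) * (ψ v : ℂ)‖
        ≤ (∫ v in Set.Ioo (-1:ℝ) 0, φ v * ψ v) - c * s ^ 2 := by
  set ω : ℝ → ℝ := fun v => -(2 * a) * |v|⁻¹
  set μ := volume.restrict (Set.Ioo (-1:ℝ) 0)
  have hF0 : ∀ᵐ v ∂μ, 0 ≤ φ v * ψ v :=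
    (ae_restrict_mem measurableSet_Ioo).mono fun v hv => mul_nonneg (hφ0 v hv) (hψ0 v hv)
  have hweight (v : ℝ) : 1 ≤ 1 + |v|⁻¹ + (|v| ^ 2)⁻¹ ∧ (|v| ^ 2)⁻¹ ≤ 1 + |v|⁻¹ + (|v| ^ 2)⁻¹ := by
    have h1 : 0 ≤ |v|⁻¹ := by positivity
    have h2 : 0 ≤ (|v| ^ 2)⁻¹ := by positivity
    constructor <;> linarith
  have hF : Integrable (fun v => φ v * ψ v) μ := by
    simpa using hint.mul_of_abs_le_const_mul hF0 (hφ.mul hψ).aestronglyMeasurable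
      (g := fun _ => 1) aestronglyMeasurable_const 1 fun v => by simpa using (hweight v).1
  have hFω2 : Integrable (fun v => φ v * ψ v * ω v ^ 2) μ := by
    refine hint.mul_of_abs_le_const_mul hF0 (hφ.mul hψ).aestronglyMeasurable (by fun_prop)
      (4 * a ^ 2) fun v => ?_
    rw [abs_of_nonneg (sq_nonneg _), show ω v ^ 2 = 4 * a ^ 2 * (|v| ^ 2)⁻¹ by simp only [ω]; ring]
    gcongr
    exact (hweight v).2
  have hnonconst (c : ℝ) : ¬ ∀ᵐ v ∂μ, φ v * ψ v = 0 ∨ ω v = c := by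
    intro hc
    have hlevel : ∀ᵐ v ∂μ, ω v ≠ c := ae_restrict_of_ae
      (measure_eq_zero_iff_ae_notMem.mp (volume_setOf_mul_inv_abs_eq (by linarith) c))
    exact hne (by filter_upwards [hc, hlevel] with v h1 h2 using h1.resolve_right h2)
  obtain ⟨δ, hδ, c, hc, h⟩ :=
    exists_norm_integral_ofReal_mul_exp_le hF0 hF (by fun_prop) hFω2 hnonconst
  refine ⟨δ, hδ, c, hc, fun s hs => ?_⟩
  have hintegrand (v : ℝ) : (φ v : ℂ) * Complex.exp (-(2 * s * a * Complex.I) / ((|v| : ℝ) : ℂ))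
      * (ψ v : ℂ) = ((φ v * ψ v : ℝ) : ℂ) * Complex.exp ((s * ω v : ℝ) * Complex.I) := by
    simp only [ω]; push_cast; ring_nf
  simp_rw [hintegrand]
  exact h s hs
end
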